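/- arXiv:2601.17160 — 6 statements merged into one kernel-verified Lean document; each statement's English description precedes it below -/
import Mathlib

section
/- Let (Ω, ℱ, μ) be a probability space, E ∈ ℱ with μ(E) = p ∈ (0,1), and let κ be a Markov kernel from Ω to a measurable space 𝒴. Let f : [0,∞) → ℝ be convex with f(1) = 0 and f(0) < ∞. Let P = (μ(·|E)) ★ κ and Q = μ ★ κ be the pushforwards of the conditional measure and of μ through κ. Then D_f(P ‖ Q) ≤ B_f(p), where B_f(p) = p·f(1/p) + (1−p)·f(0). -/
open MeasureTheory ProbabilityTheory Set

/-- The f-divergence `D_f(P‖Q) = ∫ f(dP/dQ) dQ` (for `P ≪ Q`), with the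
Radon–Nikodym derivative taken pointwise. -/
noncomputable def fDivergence {𝒴 : Type*} [MeasurableSpace 𝒴]
    (f : ℝ → ℝ) (P Q : Measure 𝒴) : ℝ :=
  ∫ y, f ((P.rnDeriv Q y).toReal) ∂Q

/-- The bound `B_f(p) = p·f(1/p) + (1−p)·f(0)`. -/
noncomputable def Bf (f : ℝ → ℝ) (p : ℝ) : ℝ := p * f (1 / p) + (1 - p) * f 0

/-- **f-divergence bound.** Let `μ` be a probability measure, `E` an event
with `μ(E) = p ∈ (0,1)`, and `κ` a Markov kernel into `𝒴`. Let `P = μ(·|E) ★ κ` and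
`Q = μ ★ κ` be the mixtures of `κ` along the conditional measure and along `μ`. Then for
any convex `f : [0,∞) → ℝ` with `f(1) = 0`, `D_f(P ‖ Q) ≤ B_f(p)`. -/
theorem fDivergence_bind_le_Bf
    {Ω 𝒴 : Type*} [MeasurableSpace Ω] [MeasurableSpace 𝒴]
    (μ : Measure Ω) [IsProbabilityMeasure μ]
    (E : Set Ω) (hE : MeasurableSet E) (p : ℝ) (hp : p ∈ Set.Ioo (0:ℝ) 1)
    (hpE : μ E = ENNReal.ofReal p)
    (κ : ProbabilityTheory.Kernel Ω 𝒴) [ProbabilityTheory.IsMarkovKernel κ]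
    (f : ℝ → ℝ) (hconv : ConvexOn ℝ (Set.Ici 0) f) (hf1 : f 1 = 0) :
    fDivergence f ((μ[|E]).bind κ) (μ.bind κ) ≤ Bf f p := by
  obtain ⟨hp0, hp1⟩ := hp
  have hE0 : μ E ≠ 0 := by rw [hpE]; exact (ENNReal.ofReal_pos.mpr hp0).ne'
  haveI : IsProbabilityMeasure (μ[|E]) := ProbabilityTheory.cond_isProbabilityMeasure hE0
  set P := (μ[|E]).bind κ with hPdef
  set Q := μ.bind κ with hQdef
  have hbindP : ∀ (ν : Measure Ω), IsProbabilityMeasure ν →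
      IsProbabilityMeasure (ν.bind κ) := by
    intro ν hν
    constructor
    rw [Measure.bind_apply MeasurableSet.univ κ.measurable.aemeasurable]
    simp
  haveI hPprob : IsProbabilityMeasure P := hbindP _ ‹_›
  haveI hQprob : IsProbabilityMeasure Q := hbindP _ ‹_›
  -- the key measure inequality `p • P ≤ Q`
  have hle : ENNReal.ofReal p • P ≤ Q := by
    refine Measure.le_iff.mpr fun s hs => ?_
    have hPs : P s = (μ E)⁻¹ * ∫⁻ a in E, κ a s ∂μ := by
      rw [hPdef, Measure.bind_apply hs κ.measurable.aemeasurable,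
        ProbabilityTheory.cond, lintegral_smul_measure, smul_eq_mul]
    have hQs : Q s = ∫⁻ a, κ a s ∂μ := by
      rw [hQdef, Measure.bind_apply hs κ.measurable.aemeasurable]
    rw [Measure.smul_apply, smul_eq_mul, hPs, hQs, ← hpE, ← mul_assoc,
      ENNReal.mul_inv_cancel hE0 (measure_ne_top μ E), one_mul]
    exact lintegral_mono' Measure.restrict_le_self le_rfl
  have hplt : (ENNReal.ofReal p) ≠ 0 := (ENNReal.ofReal_pos.mpr hp0).ne'
  have hac : P ≪ Q := by
    refine Measure.AbsolutelyContinuous.mk fun s hs h0 => ?_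
    have := (Measure.le_iff'.mp hle) s
    rw [h0, Measure.smul_apply, smul_eq_mul, nonpos_iff_eq_zero] at this
    exact (mul_eq_zero.mp this).resolve_left hplt
  set g : 𝒴 → ℝ := fun y => (P.rnDeriv Q y).toReal with hgdef
  have hg0 : ∀ y, 0 ≤ g y := fun y => ENNReal.toReal_nonneg
  -- a.e. bound on the RN derivative
  have hg_le : ∀ᵐ y ∂Q, g y ≤ 1 / p := by
    have h1 : (ENNReal.ofReal p • P).rnDeriv Q ≤ᵐ[Q] 1 :=
      Measure.rnDeriv_le_one_of_le hle
    have h2 : (ENNReal.ofReal p • P).rnDeriv Q =ᵐ[Q]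
        ENNReal.ofReal p • P.rnDeriv Q :=
      Measure.rnDeriv_smul_left_of_ne_top P Q ENNReal.ofReal_ne_top
    filter_upwards [h1, h2] with y hy1 hy2
    rw [hy2] at hy1
    simp only [Pi.smul_apply, Pi.one_apply, smul_eq_mul] at hy1
    have hinv : P.rnDeriv Q y ≤ (ENNReal.ofReal p)⁻¹ := by
      rw [ENNReal.le_inv_iff_mul_le]
      rwa [mul_comm]
    have htop : (ENNReal.ofReal p)⁻¹ ≠ ⊤ := by
      simp [ENNReal.inv_ne_top, hplt]
    calc g y ≤ ((ENNReal.ofReal p)⁻¹).toReal := ENNReal.toReal_mono htop hinv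
      _ = 1 / p := by
          rw [ENNReal.toReal_inv, ENNReal.toReal_ofReal hp0.le, one_div]
  -- convexity chord bound
  have hmem : ∀ x : ℝ, 0 ≤ x → x ∈ Set.Ici (0:ℝ) := fun x hx => hx
  have h1p_pos : (0:ℝ) < 1 / p := by positivity
  have hchord : ∀ x : ℝ, 0 ≤ x → x ≤ 1 / p →
      f x ≤ f 0 + (p * x) * (f (1 / p) - f 0) := by
    intro x hx0 hx1
    have hpx : p * x ≤ 1 := by
      calc p * x ≤ p * (1 / p) := by gcongr
        _ = 1 := by field_simp
    have ha : 0 ≤ 1 - p * x := by linarith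
    have hb : 0 ≤ p * x := by positivity
    have hab : (1 - p * x) + p * x = 1 := by ring
    have := hconv.2 (hmem 0 le_rfl) (hmem (1/p) h1p_pos.le) ha hb hab
    simp only [smul_eq_mul, mul_zero, zero_add] at this
    have hx' : p * x * (1 / p) = x := by field_simp
    rw [hx'] at this
    linarith
  set M : ℝ := max (f 0) (f (1 / p)) with hMdef
  have hM : ∀ x : ℝ, 0 ≤ x → x ≤ 1 / p → f x ≤ M := by
    intro x hx0 hx1
    have h := hchord x hx0 hx1
    have hpx : p * x ≤ 1 := by
      calc p * x ≤ p * (1 / p) := by gcongr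
        _ = 1 := by field_simp
    rcases le_total (f 0) (f (1 / p)) with hc | hc
    · have : f 0 + (p * x) * (f (1/p) - f 0) ≤ f (1/p) := by
        nlinarith [mul_nonneg (by linarith : (0:ℝ) ≤ 1 - p * x) (sub_nonneg.mpr hc)]
      exact le_trans h (this.trans (le_max_right _ _))
    · have : f 0 + (p * x) * (f (1/p) - f 0) ≤ f 0 := by
        nlinarith [mul_nonneg (mul_nonneg hp0.le hx0) (sub_nonneg.mpr hc)]
      exact le_trans h (this.trans (le_max_left _ _))
  have hlow : ∀ x : ℝ, 0 ≤ x → x ≤ 1 / p → 2 * f (1 / (2 * p)) - M ≤ f x := by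
    intro x hx0 hx1
    have hy0 : 0 ≤ 1 / p - x := by linarith
    have hy1 : 1 / p - x ≤ 1 / p := by linarith
    have hmid := hconv.2 (hmem x hx0) (hmem (1/p - x) hy0)
      (by norm_num : (0:ℝ) ≤ 1/2) (by norm_num : (0:ℝ) ≤ 1/2) (by norm_num)
    simp only [smul_eq_mul] at hmid
    have hpt : (1/2 : ℝ) * x + (1/2) * (1/p - x) = 1 / (2 * p) := by
      field_simp; ring
    rw [hpt] at hmid
    have hfy : f (1/p - x) ≤ M := hM _ hy0 hy1
    linarith
  set C : ℝ := max |M| |2 * f (1 / (2 * p)) - M| with hCdef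
  have habs : ∀ x : ℝ, 0 ≤ x → x ≤ 1 / p → |f x| ≤ C := by
    intro x hx0 hx1
    refine abs_le.mpr ⟨?_, ?_⟩
    · have := hlow x hx0 hx1
      have h2 : -|2 * f (1 / (2 * p)) - M| ≤ 2 * f (1 / (2 * p)) - M :=
        neg_abs_le _
      have h3 : |2 * f (1 / (2 * p)) - M| ≤ C := le_max_right _ _
      linarith
    · have := hM x hx0 hx1
      have h2 : M ≤ |M| := le_abs_self _
      have h3 : |M| ≤ C := le_max_left _ _
      linarith
  -- measurability of `f ∘ g`
  have hgmeas : Measurable g := (Measure.measurable_rnDeriv P Q).ennreal_toReal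
  set F : ℝ → ℝ := (Set.Ioi (0:ℝ)).piecewise f (fun _ => f 0) with hFdef
  have hFf : ∀ x : ℝ, 0 ≤ x → F x = f x := by
    intro x hx
    rcases hx.lt_or_eq with h | h
    · exact Set.piecewise_eq_of_mem _ _ _ h
    · rw [← h, hFdef, Set.piecewise_eq_of_notMem _ _ _ (by simp)]
  have hcontf : ContinuousOn f (Set.Ioi (0:ℝ)) :=
    (hconv.subset Set.Ioi_subset_Ici_self (convex_Ioi 0)).continuousOn isOpen_Ioi
  have hFmeas : Measurable F :=
    ContinuousOn.measurable_piecewise hcontf continuousOn_const measurableSet_Ioi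
  have hfg_eq : (fun y => f (g y)) = F ∘ g := by
    funext y; exact (hFf (g y) (hg0 y)).symm
  have hfgmeas : AEStronglyMeasurable (fun y => f (g y)) Q := by
    rw [hfg_eq]
    exact (hFmeas.comp hgmeas).aestronglyMeasurable
  -- integrability
  have hint_f : Integrable (fun y => f (g y)) Q := by
    refine (integrable_const C).mono' hfgmeas ?_
    filter_upwards [hg_le] with y hy
    simpa using habs (g y) (hg0 y) hy
  have hint_g : Integrable g Q := Measure.integrable_toReal_rnDeriv
  have hint_L : Integrable (fun y => f 0 + (p * g y) * (f (1/p) - f 0)) Q := by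
    apply Integrable.add (integrable_const _)
    have : (fun y => (p * g y) * (f (1/p) - f 0)) =
        fun y => (p * (f (1/p) - f 0)) * g y := by funext y; ring
    rw [this]
    exact hint_g.const_mul _
  -- integral computation
  have hIg : ∫ y, g y ∂Q = 1 := by
    rw [hgdef]
    rw [Measure.integral_toReal_rnDeriv hac]
    simp
  have hmono : fDivergence f P Q ≤ ∫ y, (f 0 + (p * g y) * (f (1/p) - f 0)) ∂Q := by
    refine integral_mono_ae hint_f hint_L ?_
    filter_upwards [hg_le] with y hy
    exact hchord (g y) (hg0 y) hy
  have hRHS : ∫ y, (f 0 + (p * g y) * (f (1/p) - f 0)) ∂Q = Bf f p := by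
    rw [integral_add (integrable_const _)]
    · have h1 : ∫ y, (p * g y) * (f (1/p) - f 0) ∂Q
          = (p * (f (1/p) - f 0)) * ∫ y, g y ∂Q := by
        rw [← integral_const_mul]
        congr 1; funext y; ring
      rw [h1, hIg, integral_const]
      simp only [measure_univ, ENNReal.toReal_one, probReal_univ, smul_eq_mul, one_mul, mul_one]
      rw [Bf]; ring
    · have : (fun y => (p * g y) * (f (1/p) - f 0)) =
          fun y => (p * (f (1/p) - f 0)) * g y := by funext y; ring
      rw [this]
      exact hint_g.const_mul _
  calc fDivergence f P Q ≤ _ := hmono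
    _ = Bf f p := hRHS
end

section
/- Let (Ω, ℱ, μ) be a probability space, E ∈ ℱ with μ(E) = p ∈ (0,1), and let κ be a Markov kernel from Ω to a measurable space 𝒴. Let P = (μ(·|E)) ★ κ and Q = μ ★ κ. Then the Kullback–Leibler divergence satisfies D_KL(P ‖ Q) ≤ −log p. -/
open MeasureTheory ProbabilityTheory Set
open scoped ENNReal

/-- The Kullback–Leibler divergence `D_KL(P‖Q) = ∫ log(dP/dQ) dP` (for `P ≪ Q`). -/
noncomputable def klDivergence {𝒴 : Type*} [MeasurableSpace 𝒴] (P Q : Measure 𝒴) : ℝ :=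
  ∫ y, Real.log ((P.rnDeriv Q y).toReal) ∂P

/-- **KL bound.** Let `μ` be a probability measure, `E` an event with
`μ(E) = p ∈ (0,1)`, and `κ` a Markov kernel into `𝒴`. Let `P = μ(·|E) ★ κ` and
`Q = μ ★ κ`. Then `D_KL(P ‖ Q) ≤ −log p`. -/
theorem klDivergence_bind_le
    {Ω 𝒴 : Type*} [MeasurableSpace Ω] [MeasurableSpace 𝒴]
    (μ : Measure Ω) [IsProbabilityMeasure μ]
    (E : Set Ω) (hE : MeasurableSet E) (p : ℝ) (hp : p ∈ Set.Ioo (0:ℝ) 1)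
    (hpE : μ E = ENNReal.ofReal p)
    (κ : ProbabilityTheory.Kernel Ω 𝒴) [ProbabilityTheory.IsMarkovKernel κ] :
    klDivergence ((μ[|E]).bind κ) (μ.bind κ) ≤ - Real.log p := by
  have hp0 : 0 < p := hp.1
  have hp1 : p < 1 := hp.2
  have hE0 : μ E ≠ 0 := by rw [hpE]; simp [ENNReal.ofReal_eq_zero]; linarith
  set c : ℝ≥0∞ := (μ E)⁻¹ with hc
  have hcne0 : c ≠ 0 := by simp [hc, hpE]
  have hcnetop : c ≠ ⊤ := by simp [hc, hE0]
  have hcond : IsProbabilityMeasure (μ[|E]) := cond_isProbabilityMeasure hE0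
  set P := (μ[|E]).bind κ with hP
  set Q := μ.bind κ with hQ
  have hPuniv : ∀ (ν : Measure Ω), IsProbabilityMeasure ν → IsProbabilityMeasure (ν.bind κ) := by
    intro ν hν
    constructor
    rw [Measure.bind_apply MeasurableSet.univ (Kernel.measurable κ).aemeasurable]
    simp [measure_univ]
  have hPprob : IsProbabilityMeasure P := hPuniv _ hcond
  have hQprob : IsProbabilityMeasure Q := hPuniv _ inferInstance
  -- P ≤ c • Q
  have hle : P ≤ c • Q := by
    refine Measure.le_iff.2 fun s hs => ?_
    rw [hP, Measure.bind_apply hs (Kernel.measurable κ).aemeasurable]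
    have : μ[|E] = c • μ.restrict E := by
      rw [ProbabilityTheory.cond, hc]
    rw [this, lintegral_smul_measure]
    simp only [Measure.smul_apply, smul_eq_mul]
    rw [hQ, Measure.bind_apply hs (Kernel.measurable κ).aemeasurable]
    exact mul_le_mul_right (lintegral_mono' Measure.restrict_le_self le_rfl) c
  have hPQ : P ≪ Q := Measure.absolutelyContinuous_of_le_smul hle
  -- rnDeriv bound
  have hsf : IsFiniteMeasure (c • Q) := by
    constructor
    simp only [Measure.smul_apply, smul_eq_mul, measure_univ, mul_one]
    exact hcnetop.lt_top
  have h1 : P.rnDeriv (c • Q) ≤ᵐ[c • Q] 1 := Measure.rnDeriv_le_one_of_le hle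
  have h1' : P.rnDeriv (c • Q) ≤ᵐ[Q] 1 :=
    (Measure.absolutelyContinuous_smul hcne0).ae_le h1
  have h2 : P.rnDeriv (c • Q) =ᵐ[Q] c⁻¹ • P.rnDeriv Q :=
    Measure.rnDeriv_smul_right_of_ne_top P Q hcne0 hcnetop
  have h3 : P.rnDeriv Q ≤ᵐ[Q] fun _ => c := by
    filter_upwards [h1', h2] with y hy1 hy2
    have : c⁻¹ * P.rnDeriv Q y ≤ 1 := by
      have := hy2 ▸ hy1
      simpa [smul_eq_mul] using this
    calc P.rnDeriv Q y = c * (c⁻¹ * P.rnDeriv Q y) := by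
          rw [← mul_assoc, ENNReal.mul_inv_cancel hcne0 hcnetop, one_mul]
      _ ≤ c * 1 := mul_le_mul_right this c
      _ = c := mul_one c
  have h4 : ∀ᵐ y ∂P, Real.log ((P.rnDeriv Q y).toReal) ≤ - Real.log p := by
    filter_upwards [hPQ.ae_le h3] with y hy
    have hcval : c = ENNReal.ofReal p⁻¹ := by
      rw [hc, hpE, ← ENNReal.ofReal_inv_of_pos hp0]
    have htR : (P.rnDeriv Q y).toReal ≤ p⁻¹ := by
      rw [hcval] at hy
      exact ENNReal.toReal_le_of_le_ofReal (by positivity) hy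
    have hlogp : Real.log p < 0 := Real.log_neg hp0 hp1
    rcases eq_or_lt_of_le (ENNReal.toReal_nonneg (a := P.rnDeriv Q y)) with h0 | h0
    · rw [← h0, Real.log_zero]; linarith
    · calc Real.log ((P.rnDeriv Q y).toReal) ≤ Real.log p⁻¹ :=
            Real.log_le_log h0 htR
        _ = - Real.log p := Real.log_inv p
  rw [klDivergence]
  by_cases hint : Integrable (fun y => Real.log ((P.rnDeriv Q y).toReal)) P
  · calc ∫ y, Real.log ((P.rnDeriv Q y).toReal) ∂P
        ≤ ∫ _, - Real.log p ∂P := integral_mono_ae hint (integrable_const _) h4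
      _ = - Real.log p := by simp [measure_univ]
  · rw [integral_undef hint]
    have : Real.log p < 0 := Real.log_neg hp.1 hp.2
    linarith
end

section
/- Let (Ω, ℱ, μ) be a probability space, E ∈ ℱ with μ(E) = p ∈ (0,1), and let κ be a Markov kernel from Ω to a measurable space 𝒴. Let P = (μ(·|E)) ★ κ and Q = μ ★ κ. Then the squared Hellinger distance satisfies D_H(P ‖ Q) ≤ 1 − √p. -/
open MeasureTheory ProbabilityTheory Set

/-- The squared Hellinger distance as the f-divergence `∫ f(dP/dQ) dQ` with
`f(t) = (1/2)(√t − 1)²` (for `P ≪ Q`). -/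
noncomputable def hellingerDivergence {𝒴 : Type*} [MeasurableSpace 𝒴] (P Q : Measure 𝒴) : ℝ :=
  ∫ y, (1 / 2 : ℝ) * (Real.sqrt ((P.rnDeriv Q y).toReal) - 1) ^ 2 ∂Q

/-- **Hellinger bound.** Let `μ` be a probability measure, `E` an event with
`μ(E) = p ∈ (0,1)`, and `κ` a Markov kernel into `𝒴`. Let `P = μ(·|E) ★ κ` and
`Q = μ ★ κ`. Then the squared Hellinger distance satisfies `D_H(P ‖ Q) ≤ 1 - √p`. -/
theorem hellingerDivergence_bind_le
    {Ω 𝒴 : Type*} [MeasurableSpace Ω] [MeasurableSpace 𝒴]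
    (μ : Measure Ω) [IsProbabilityMeasure μ]
    (E : Set Ω) (hE : MeasurableSet E) (p : ℝ) (hp : p ∈ Set.Ioo (0:ℝ) 1)
    (hpE : μ E = ENNReal.ofReal p)
    (κ : ProbabilityTheory.Kernel Ω 𝒴) [ProbabilityTheory.IsMarkovKernel κ] :
    hellingerDivergence ((μ[|E]).bind κ) (μ.bind κ) ≤ 1 - Real.sqrt p := by
  obtain ⟨hp0, hp1⟩ := hp
  have hE0 : μ E ≠ 0 := by rw [hpE]; simp [hp0, not_le]
  have hcond : IsProbabilityMeasure (μ[|E]) := cond_isProbabilityMeasure hE0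
  set P : Measure 𝒴 := (μ[|E]).bind κ with hP
  set Q : Measure 𝒴 := μ.bind κ with hQ
  have hPprob : IsProbabilityMeasure P := by
    constructor
    rw [hP, Measure.bind_apply MeasurableSet.univ (Kernel.measurable κ).aemeasurable]
    simp
  have hQprob : IsProbabilityMeasure Q := by
    constructor
    rw [hQ, Measure.bind_apply MeasurableSet.univ (Kernel.measurable κ).aemeasurable]
    simp
  set c : ENNReal := (ENNReal.ofReal p)⁻¹ with hc
  have hc0 : c ≠ 0 := by simp [hc]
  have hctop : c ≠ ⊤ := by simp [hc, hp0, ENNReal.ofReal_eq_zero, not_le]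
  -- P ≤ c • Q
  have hle : P ≤ c • Q := by
    rw [Measure.le_iff]
    intro s hs
    have h1 : P s = c * ((μ.restrict E).bind κ) s := by
      rw [hP, ProbabilityTheory.cond, hpE, Measure.bind_smul, Measure.smul_apply,
        smul_eq_mul]
    rw [h1, Measure.smul_apply, smul_eq_mul]
    refine mul_le_mul_right ?_ c
    rw [Measure.bind_apply hs (Kernel.measurable κ).aemeasurable, hQ,
      Measure.bind_apply hs (Kernel.measurable κ).aemeasurable]
    exact lintegral_mono' Measure.restrict_le_self le_rfl
  have hac : P ≪ Q := Measure.absolutelyContinuous_of_le_smul hle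
  -- rnDeriv bound
  have hrn : P.rnDeriv Q ≤ᵐ[Q] fun _ => c := by
    have hfin : IsFiniteMeasure (c • Q) := by
      constructor
      rw [Measure.smul_apply, smul_eq_mul, measure_univ, mul_one]
      exact hctop.lt_top
    have h1 : P.rnDeriv (c • Q) ≤ᵐ[c • Q] 1 := Measure.rnDeriv_le_one_of_le hle
    have h1' : P.rnDeriv (c • Q) ≤ᵐ[Q] 1 := by
      exact (Measure.absolutelyContinuous_smul hc0).ae_le h1
    have h2 : P.rnDeriv (c • Q) =ᵐ[Q] c⁻¹ • P.rnDeriv Q :=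
      Measure.rnDeriv_smul_right_of_ne_top P Q hc0 hctop
    filter_upwards [h1', h2] with y hy1 hy2
    rw [hy2] at hy1
    simp only [Pi.smul_apply, smul_eq_mul, Pi.one_apply] at hy1
    calc P.rnDeriv Q y = c * (c⁻¹ * P.rnDeriv Q y) := by
          rw [← mul_assoc, ENNReal.mul_inv_cancel hc0 hctop, one_mul]
      _ ≤ c * 1 := mul_le_mul_right hy1 c
      _ = c := mul_one c
  set r : 𝒴 → ℝ := fun y => (P.rnDeriv Q y).toReal with hr
  have hr_nonneg : ∀ y, 0 ≤ r y := fun y => ENNReal.toReal_nonneg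
  have hr_le : r ≤ᵐ[Q] fun _ => 1 / p := by
    filter_upwards [hrn] with y hy
    calc r y ≤ c.toReal := ENNReal.toReal_mono hctop hy
      _ = 1 / p := by
        rw [hc, ENNReal.toReal_inv, ENNReal.toReal_ofReal hp0.le, one_div]
  have hr_int : Integrable r Q := Measure.integrable_toReal_rnDeriv
  have hr_integral : ∫ y, r y ∂Q = 1 := by
    rw [hr]
    rw [Measure.integral_toReal_rnDeriv hac]
    simp
  -- the dominating function
  set g : 𝒴 → ℝ := fun y => (1 - 2 * Real.sqrt p) / 2 * r y + 1 / 2 with hg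
  have hg_int : Integrable g Q := by
    exact (hr_int.const_mul _).add (integrable_const _)
  have hfg : (fun y => (1 / 2 : ℝ) * (Real.sqrt (r y) - 1) ^ 2) ≤ᵐ[Q] g := by
    filter_upwards [hr_le] with y hy
    have h0 : 0 ≤ r y := hr_nonneg y
    have hs1 : Real.sqrt (r y) ≤ Real.sqrt (1 / p) := Real.sqrt_le_sqrt hy
    have hs2 : Real.sqrt p * Real.sqrt (1 / p) = 1 := by
      rw [← Real.sqrt_mul hp0.le]
      rw [mul_one_div, div_self hp0.ne']
      exact Real.sqrt_one
    have hsq : Real.sqrt (r y) * Real.sqrt (r y) = r y := Real.mul_self_sqrt h0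
    have hsn : 0 ≤ Real.sqrt (r y) := Real.sqrt_nonneg _
    have hpn : 0 ≤ Real.sqrt p := Real.sqrt_nonneg _
    -- key: √p * r y ≤ √(r y)
    have hkey : Real.sqrt p * r y ≤ Real.sqrt (r y) := by
      calc Real.sqrt p * r y = Real.sqrt p * Real.sqrt (r y) * Real.sqrt (r y) := by
            rw [mul_assoc, hsq]
        _ ≤ Real.sqrt p * Real.sqrt (1 / p) * Real.sqrt (r y) := by
            apply mul_le_mul_of_nonneg_right _ hsn
            exact mul_le_mul_of_nonneg_left hs1 hpn
        _ = Real.sqrt (r y) := by rw [hs2, one_mul]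
    simp only [hg]
    nlinarith [hkey, hsq]
  have hf_nonneg : 0 ≤ᵐ[Q] fun y => (1 / 2 : ℝ) * (Real.sqrt (r y) - 1) ^ 2 :=
    Filter.Eventually.of_forall fun y => by positivity
  have hmain : hellingerDivergence P Q ≤ ∫ y, g y ∂Q := by
    exact integral_mono_of_nonneg hf_nonneg hg_int hfg
  refine hmain.trans_eq ?_
  rw [hg]
  rw [integral_add (hr_int.const_mul _) (integrable_const _),
    integral_const_mul, hr_integral, integral_const]
  simp only [measure_univ, probReal_univ, ENNReal.toReal_one, smul_eq_mul, mul_one, one_mul]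
  ring
end

section
/- For every t ∈ ℝ, the supremum sup_{s>0} ( s·t − (1 − s)²/(2s) ) equals 1 − √(1 − 2t) if t ≤ 1/2, and equals +∞ if t > 1/2. (This is the convex conjugate g*_{χ²} of g_{χ²}(s) = s·f_{χ²}(1/s) = (1 − s)²/(2s), where f_{χ²}(t) = (1/2)(t − 1)² is the chi-squared generator.) -/
open Set

/-- **convex conjugate, chi-squared case.** For the chi-squared generator
`f_{χ²}(t) = (1/2)(t − 1)²`, with `g_{χ²}(s) = s·f_{χ²}(1/s) = (1 − s)²/(2s)`, the convex
conjugate `g*_{χ²}(t) = sup_{s>0} (s·t − (1 − s)²/(2s))` equals `1 − √(1 − 2t)` for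
`t ≤ 1/2` and `+∞` for `t > 1/2`. -/
theorem gstarChiSq_eq (t : ℝ) :
    (t ≤ 1 / 2 →
      (⨆ s : Ioi (0:ℝ),
          (((s : ℝ) * t - (1 - s) ^ 2 / (2 * s) : ℝ) : EReal)) =
        ((1 - Real.sqrt (1 - 2 * t) : ℝ) : EReal)) ∧
    (1 / 2 < t →
      (⨆ s : Ioi (0:ℝ),
          (((s : ℝ) * t - (1 - s) ^ 2 / (2 * s) : ℝ) : EReal)) = ⊤) := by
  constructor
  · intro ht
    set r := Real.sqrt (1 - 2 * t) with hrdef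
    have hr0 : 0 ≤ r := Real.sqrt_nonneg _
    have hr2 : r ^ 2 = 1 - 2 * t := Real.sq_sqrt (by linarith)
    apply le_antisymm
    · apply iSup_le
      rintro ⟨s, hs⟩
      have hs0 : (0:ℝ) < s := hs
      rw [EReal.coe_le_coe_iff]
      have key : s * t - (1 - r) ≤ (1 - s) ^ 2 / (2 * s) := by
        rw [le_div_iff₀ (by positivity)]
        nlinarith [sq_nonneg (r * s - 1)]
      linarith
    · apply le_of_forall_lt
      intro c hc
      induction c using EReal.rec with
      | bot =>
          refine lt_of_lt_of_le (bot_lt_iff_ne_bot.2 ?_)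
            (le_iSup (fun s : Ioi (0:ℝ) =>
              (((s : ℝ) * t - (1 - s) ^ 2 / (2 * s) : ℝ) : EReal)) ⟨1, by norm_num⟩)
          exact EReal.coe_ne_bot _
      | top => exact absurd hc not_top_lt
      | coe x =>
          have hx : x < 1 - r := by exact_mod_cast hc
          rcases le_or_gt ((1 - x) / 2) r with h | h
          · -- r > 0, take s = 1/r
            have hrpos : 0 < r := by linarith
            refine lt_of_lt_of_le ?_
              (le_iSup (fun s : Ioi (0:ℝ) =>
                (((s : ℝ) * t - (1 - s) ^ 2 / (2 * s) : ℝ) : EReal)) ⟨1 / r, mem_Ioi.mpr (by positivity)⟩)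
            rw [EReal.coe_lt_coe_iff]
            have hv : (1 / r) * t - (1 - 1 / r) ^ 2 / (2 * (1 / r)) = 1 - r := by
              field_simp
              nlinarith [hr2]
            rw [hv]; exact hx
          · -- take s = 2/(1-x)
            have h1x : 0 < 1 - x := by linarith
            refine lt_of_lt_of_le ?_
              (le_iSup (fun s : Ioi (0:ℝ) =>
                (((s : ℝ) * t - (1 - s) ^ 2 / (2 * s) : ℝ) : EReal))
                ⟨2 / (1 - x), mem_Ioi.mpr (div_pos two_pos h1x)⟩)
            rw [EReal.coe_lt_coe_iff]
            have htval : t = (1 - r ^ 2) / 2 := by linarith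
            have hv : (2 / (1 - x)) * t - (1 - 2 / (1 - x)) ^ 2 / (2 * (2 / (1 - x)))
                = 1 - r ^ 2 / (1 - x) - (1 - x) / 4 := by
              rw [htval]; field_simp; ring
            have key : r ^ 2 / (1 - x) ≤ (1 - x) / 4 := by
              rw [div_le_iff₀ h1x]; nlinarith
            simp only []
            rw [hv]
            linarith
  · intro ht
    rw [iSup_eq_top]
    intro b hb
    induction b using EReal.rec with
    | bot =>
        exact ⟨⟨1, by norm_num⟩, bot_lt_iff_ne_bot.2 (EReal.coe_ne_bot _)⟩
    | top => exact absurd hb (lt_irrefl _)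
    | coe x =>
        have ht' : 0 < t - 1 / 2 := by linarith
        set s : ℝ := max 1 ((x + 1) / (t - 1 / 2)) with hsdef
        have hs1 : 1 ≤ s := le_max_left _ _
        have hs0 : 0 < s := by linarith
        have hs2 : (x + 1) / (t - 1 / 2) ≤ s := le_max_right _ _
        have hxs : x + 1 ≤ s * (t - 1 / 2) := by
          rw [div_le_iff₀ ht'] at hs2; linarith
        refine ⟨⟨s, hs0⟩, ?_⟩
        rw [EReal.coe_lt_coe_iff]
        have h1 : (1 - s) ^ 2 / (2 * s) < s * t - x := by
          rw [div_lt_iff₀ (by positivity)]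
          nlinarith [hxs, hs1, mul_le_mul_of_nonneg_left hxs (by linarith : (0:ℝ) ≤ 2 * s)]
        linarith
end

section
/- For every t ∈ ℝ, the supremum sup_{s>0} ( s·t − (1/2)( s log s − (1+s) log(1+s) + (1+s) log 2 ) ) equals −(1/2)·log(2 − exp(2t)) if t < (1/2)·log 2, and equals +∞ if t ≥ (1/2)·log 2. (This is the convex conjugate g*_JS of g_JS(s) = s·f_JS(1/s) = (1/2)(s log s − (1+s) log(1+s) + (1+s) log 2), where f_JS is the Jensen–Shannon generator.) -/
open Set

lemma js_ub (t s : ℝ) (hs : 0 < s) (ht : t < (1 / 2) * Real.log 2) :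
    s * t - (1 / 2) * (s * Real.log s - (1 + s) * Real.log (1 + s) + (1 + s) * Real.log 2)
      ≤ -((1 / 2) * Real.log (2 - Real.exp (2 * t))) := by
  set a := Real.exp (2 * t) with ha_def
  have ha : 0 < a := Real.exp_pos _
  have ha2 : a < 2 := by
    have h := Real.exp_lt_exp.mpr (show 2 * t < Real.log 2 by linarith)
    rwa [Real.exp_log two_pos] at h
  have hla : Real.log a = 2 * t := Real.log_exp _
  have h1s : (0:ℝ) < 1 + s := by linarith
  have hx1 : 0 < a * (1 + s) / (2 * s) := by positivity
  have hx2 : 0 < (1 + s) * (2 - a) / 2 := by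
    have : 0 < 2 - a := by linarith
    positivity
  have i1 : Real.log (a * (1 + s) / (2 * s)) ≤ a * (1 + s) / (2 * s) - 1 :=
    Real.log_le_sub_one_of_pos hx1
  have i2 : Real.log ((1 + s) * (2 - a) / 2) ≤ (1 + s) * (2 - a) / 2 - 1 :=
    Real.log_le_sub_one_of_pos hx2
  have e1 : Real.log (a * (1 + s) / (2 * s)) =
      Real.log a + Real.log (1 + s) - Real.log 2 - Real.log s := by
    rw [Real.log_div (by positivity) (by positivity), Real.log_mul (by positivity) (by positivity),
      Real.log_mul (by norm_num) hs.ne']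
    ring
  have e2 : Real.log ((1 + s) * (2 - a) / 2) =
      Real.log (1 + s) + Real.log (2 - a) - Real.log 2 := by
    have hb : (0:ℝ) < 2 - a := by linarith
    rw [Real.log_div (by nlinarith : (0:ℝ) < (1 + s) * (2 - a)).ne' (by norm_num),
      Real.log_mul h1s.ne' hb.ne']
  rw [e1] at i1; rw [e2] at i2
  have i1' : s * (Real.log a + Real.log (1 + s) - Real.log 2 - Real.log s)
      ≤ s * (a * (1 + s) / (2 * s) - 1) := by
    exact mul_le_mul_of_nonneg_left i1 hs.le
  have hss : s * (a * (1 + s) / (2 * s) - 1) = a * (1 + s) / 2 - s := by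
    field_simp
  rw [hss, hla] at i1'
  nlinarith [i1', i2]

lemma js_eq (t : ℝ) (ht : t < (1 / 2) * Real.log 2) :
    (Real.exp (2*t) / (2 - Real.exp (2*t))) * t -
      (1 / 2) * ((Real.exp (2*t) / (2 - Real.exp (2*t))) *
        Real.log (Real.exp (2*t) / (2 - Real.exp (2*t)))
        - (1 + Real.exp (2*t) / (2 - Real.exp (2*t))) *
            Real.log (1 + Real.exp (2*t) / (2 - Real.exp (2*t)))
        + (1 + Real.exp (2*t) / (2 - Real.exp (2*t))) * Real.log 2)
      = -((1 / 2) * Real.log (2 - Real.exp (2 * t))) := by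
  set a := Real.exp (2 * t) with ha_def
  have ha : 0 < a := Real.exp_pos _
  have ha2 : a < 2 := by
    have h := Real.exp_lt_exp.mpr (show 2 * t < Real.log 2 by linarith)
    rwa [Real.exp_log two_pos] at h
  have hb : (0:ℝ) < 2 - a := by linarith
  have hla : Real.log a = 2 * t := Real.log_exp _
  have hls : Real.log (a / (2 - a)) = 2 * t - Real.log (2 - a) := by
    rw [Real.log_div ha.ne' hb.ne', hla]
  have h1s : (1:ℝ) + a / (2 - a) = 2 / (2 - a) := by field_simp; ring
  have hl1s : Real.log (1 + a / (2 - a)) = Real.log 2 - Real.log (2 - a) := by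
    rw [h1s, Real.log_div (by norm_num) hb.ne']
  rw [hls, hl1s, h1s]
  field_simp
  ring

/-- **convex conjugate, Jensen–Shannon case.** For the Jensen–Shannon
generator `f_JS(t) = (1/2)(t log t − (t+1) log((t+1)/2))`, with
`g_JS(s) = s·f_JS(1/s) = (1/2)(s log s − (1+s) log(1+s) + (1+s) log 2)`, the convex
conjugate `g*_JS(t) = sup_{s>0} (s·t − g_JS(s))` equals `−(1/2)·log(2 − exp(2t))` for
`t < (1/2)·log 2` and `+∞` for `t ≥ (1/2)·log 2`. -/
theorem gstarJS_eq (t : ℝ) :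
    (t < (1 / 2) * Real.log 2 →
      (⨆ s : Ioi (0:ℝ),
          (((s : ℝ) * t -
              (1 / 2) * (s * Real.log s - (1 + s) * Real.log (1 + s) + (1 + s) * Real.log 2) :
            ℝ) : EReal)) =
        ((-((1 / 2) * Real.log (2 - Real.exp (2 * t))) : ℝ) : EReal)) ∧
    ((1 / 2) * Real.log 2 ≤ t →
      (⨆ s : Ioi (0:ℝ),
          (((s : ℝ) * t -
              (1 / 2) * (s * Real.log s - (1 + s) * Real.log (1 + s) + (1 + s) * Real.log 2) :
            ℝ) : EReal)) = ⊤) := by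
  constructor
  · intro ht
    apply le_antisymm
    · apply iSup_le
      rintro ⟨s, hs⟩
      exact_mod_cast EReal.coe_le_coe_iff.mpr (js_ub t s hs ht)
    · have ha : 0 < Real.exp (2 * t) := Real.exp_pos _
      have ha2 : Real.exp (2 * t) < 2 := by
        have h := Real.exp_lt_exp.mpr (show 2 * t < Real.log 2 by linarith)
        rwa [Real.exp_log two_pos] at h
      have hsmem : Real.exp (2 * t) / (2 - Real.exp (2 * t)) ∈ Ioi (0:ℝ) := by
        exact div_pos ha (by linarith)
      have h := le_iSup (fun s : Ioi (0:ℝ) =>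
          (((s : ℝ) * t -
              (1 / 2) * (s * Real.log s - (1 + s) * Real.log (1 + s) + (1 + s) * Real.log 2) :
            ℝ) : EReal)) ⟨_, hsmem⟩
      refine le_trans (le_of_eq ?_) h
      exact_mod_cast (js_eq t ht).symm
  · intro ht
    rw [iSup_eq_top]
    intro b hb
    obtain ⟨M, hbM, -⟩ := EReal.exists_between_coe_real hb
    set s : ℝ := 2 * Real.exp (2 * M) with hs_def
    have hs : 0 < s := by positivity
    refine ⟨⟨s, hs⟩, lt_of_lt_of_le hbM ?_⟩
    rw [EReal.coe_le_coe_iff]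
    have h1 : Real.log s ≤ Real.log (1 + s) := Real.log_le_log hs (by linarith)
    have h2 : Real.log 2 + 2 * M ≤ Real.log (1 + s) := by
      have : Real.log (2 * Real.exp (2 * M)) ≤ Real.log (1 + s) :=
        Real.log_le_log (by positivity) (by simp only [hs_def]; linarith)
      rwa [Real.log_mul (by norm_num) (Real.exp_pos _).ne', Real.log_exp] at this
    have h3 : Real.log 2 ≤ 2 * t := by linarith
    nlinarith [mul_le_mul_of_nonneg_left h1 hs.le, mul_le_mul_of_nonneg_left h3 hs.le]
end

section
/- Let 𝒜 = {0, 1} and let (X, A, Y) be random variables on a probability space, with X taking values in a measurable space 𝒳 and A ∈ 𝒜. Let e_a(x) be the true propensity score, i.e., a version of the conditional probability P(A = a | X = x), with e_a(x) ∈ [c, 1−c] for some 0 < c < 1/2. Let B : [0,1] → ℝ be twice continuously differentiable on a neighborhood of [c, 1−c], let λ_a : 𝒳 → (0,∞) for a ∈ 𝒜 be bounded measurable, let u_a : 𝒳 → ℝ be bounded measurable, and let G : 𝒴 × 𝒜 × 𝒳 → ℝ be bounded measurable (independent of the propensity argument). For a propensity function e' = {e'_a}_{a∈𝒜} define the debiased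 loss ℓ^db(Y, A, X; e') = λ_A(X)·( B(e'_A(X)) + G(Y, A, X) ) + u_A(X) + Σ_{a∈𝒜} e'_a(X)·λ_a(X)·B'(e'_a(X))·( 𝟙(A = a) − e'_a(X) ). Then for any bounded measurable direction functions {s_a}_{a∈𝒜} and the perturbation path e_{t,a} = e_a + t·s_a, the map t ↦ E[ℓ^db(Y, A, X; e_t)] is differentiable at t = 0 with derivative zero (Neyman orthogonality). -/
open MeasureTheory ProbabilityTheory Set

private lemma abs_mul_le'' {a b A B : ℝ} (h1 : |a| ≤ A) (h2 : |b| ≤ B) : |a * b| ≤ A * B := by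
  rw [abs_mul]
  exact mul_le_mul h1 h2 (abs_nonneg _) ((abs_nonneg _).trans h1)

/-- **Neyman orthogonality of the debiased loss.**
Let `(X, A, Y)` be random variables with binary treatment `A` (indexed by `Fin 2`), and
let `e_a(x)` be the true propensity score, i.e. a version of `P(A = a | X = x)`, with
values in `[c, 1−c]` for some `0 < c < 1/2`. Let `B` be twice continuously
differentiable on an open neighborhood `U` of `[c, 1−c]`, let `λ_a` be bounded positive
measurable, `u_a` bounded measurable, and `G` bounded jointly measurable. Define the
debiased loss
`ℓ^db(Y,A,X; e') = λ_A(X)·(B(e'_A(X)) + G(Y,A,X)) + u_A(X)`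
`   + Σ_a e'_a(X)·λ_a(X)·B'(e'_a(X))·(𝟙(A=a) − e'_a(X))`.
Then for any bounded measurable directions `{s_a}` and the perturbation path
`e_{t,a} = e_a + t·s_a`, the map `t ↦ E[ℓ^db(Y,A,X; e_t)]` is differentiable at `t = 0`
with derivative zero. -/
theorem debiased_loss_neyman_orthogonal
    {Ω 𝒳 𝒴 : Type*} [MeasurableSpace Ω] [MeasurableSpace 𝒳] [MeasurableSpace 𝒴]
    (μ : Measure Ω) [IsProbabilityMeasure μ]
    (X : Ω → 𝒳) (A : Ω → Fin 2) (Y : Ω → 𝒴)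
    (hX : Measurable X) (hA : Measurable A) (hY : Measurable Y)
    (c : ℝ) (hc0 : 0 < c) (hc1 : c < 1 / 2)
    (e : Fin 2 → 𝒳 → ℝ) (he_meas : ∀ a, Measurable (e a))
    (he_range : ∀ a x, e a x ∈ Set.Icc c (1 - c))
    (he_cond : ∀ a : Fin 2,
      μ[(fun ω => if A ω = a then (1:ℝ) else 0) | MeasurableSpace.comap X ‹MeasurableSpace 𝒳›]
        =ᵐ[μ] fun ω => e a (X ω))
    (U : Set ℝ) (hU : IsOpen U) (hUc : Set.Icc c (1 - c) ⊆ U)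
    (B : ℝ → ℝ) (hB : ContDiffOn ℝ 2 B U)
    (lam : Fin 2 → 𝒳 → ℝ) (hlam_meas : ∀ a, Measurable (lam a))
    (hlam_pos : ∀ a x, 0 < lam a x) (Mlam : ℝ) (hlam_bdd : ∀ a x, lam a x ≤ Mlam)
    (u : Fin 2 → 𝒳 → ℝ) (hu_meas : ∀ a, Measurable (u a))
    (Mu : ℝ) (hu_bdd : ∀ a x, |u a x| ≤ Mu)
    (G : 𝒴 → Fin 2 → 𝒳 → ℝ)
    (hG_meas : Measurable fun p : 𝒴 × Fin 2 × 𝒳 => G p.1 p.2.1 p.2.2)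
    (MG : ℝ) (hG_bdd : ∀ y a x, |G y a x| ≤ MG)
    (L : (Fin 2 → 𝒳 → ℝ) → Ω → ℝ)
    (hL : ∀ e' ω, L e' ω =
      lam (A ω) (X ω) * (B (e' (A ω) (X ω)) + G (Y ω) (A ω) (X ω)) + u (A ω) (X ω) +
        ∑ a : Fin 2, e' a (X ω) * lam a (X ω) * deriv B (e' a (X ω)) *
          ((if A ω = a then (1:ℝ) else 0) - e' a (X ω))) :
    ∀ s : Fin 2 → 𝒳 → ℝ, (∀ a, Measurable (s a)) → (∃ Ms : ℝ, ∀ a x, |s a x| ≤ Ms) →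
      HasDerivAt (fun t : ℝ => ∫ ω, L (fun a x => e a x + t * s a x) ω ∂μ) 0 0 := by
  intro s hs_meas hs_bdd
  classical
  obtain ⟨Ms₀, hMs₀⟩ := hs_bdd
  set Ms : ℝ := max Ms₀ 0 with hMsdef
  have hMs : ∀ a x, |s a x| ≤ Ms := fun a x => (hMs₀ a x).trans (le_max_left _ _)
  have hMs0 : (0:ℝ) ≤ Ms := le_max_right _ _
  have hc2 : c ≤ 1 - c := by linarith
  -- Ω is nonempty
  have hΩne : Nonempty Ω := by
    by_contra h
    rw [not_nonempty_iff] at h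
    have h1 : μ Set.univ = 1 := measure_univ
    rw [Set.univ_eq_empty_iff.mpr h] at h1
    simp at h1
  obtain ⟨ω₀⟩ := hΩne
  have hMlam0 : (0:ℝ) < Mlam := lt_of_lt_of_le (hlam_pos 0 (X ω₀)) (hlam_bdd 0 (X ω₀))
  -- a compact neighborhood K of [c, 1-c] inside U
  obtain ⟨δ₀, hδ₀pos, hδ₀⟩ :=
    (isCompact_Icc (a := c) (b := 1 - c)).exists_thickening_subset_open hU hUc
  set δ : ℝ := δ₀ / 2 with hδdef
  have hδpos : 0 < δ := by positivity
  set K : Set ℝ := Set.Icc (c - δ) (1 - c + δ) with hKdef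
  have hKU : K ⊆ U := by
    intro y hy
    apply hδ₀
    rw [Metric.mem_thickening_iff]
    obtain ⟨hy1, hy2⟩ := hy
    refine ⟨max c (min y (1 - c)), ⟨le_max_left _ _, max_le hc2 (min_le_right _ _)⟩, ?_⟩
    rw [Real.dist_eq]
    have habs : |y - max c (min y (1 - c))| ≤ δ := by
      rcases le_or_gt y c with h | h
      · rw [min_eq_left (h.trans hc2), max_eq_left h, abs_le]
        constructor <;> linarith
      · rcases le_or_gt y (1 - c) with h2 | h2
        · rw [min_eq_left h2, max_eq_right h.le, sub_self, abs_zero]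
          exact hδpos.le
        · rw [min_eq_right h2.le, max_eq_right hc2, abs_le]
          constructor <;> linarith
    have : δ < δ₀ := by rw [hδdef]; linarith
    linarith [habs]
  have heK : ∀ a x, e a x ∈ K := by
    intro a x
    obtain ⟨h1, h2⟩ := he_range a x
    exact ⟨by linarith, by linarith⟩
  -- the radius of the perturbation ball
  set ε : ℝ := δ / (Ms + 1) with hεdef
  have hεpos : 0 < ε := by positivity
  have hmem : ∀ t ∈ Metric.ball (0:ℝ) ε, ∀ a x, e a x + t * s a x ∈ K := by
    intro t ht a x
    rw [Metric.mem_ball, Real.dist_eq, sub_zero] at ht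
    have hts : |t * s a x| ≤ δ := by
      rw [abs_mul]
      calc |t| * |s a x| ≤ ε * Ms :=
            mul_le_mul ht.le (hMs a x) (abs_nonneg _) hεpos.le
        _ ≤ ε * (Ms + 1) := by nlinarith
        _ = δ := by rw [hεdef]; field_simp
    obtain ⟨he1, he2⟩ := he_range a x
    rw [abs_le] at hts
    exact ⟨by linarith, by linarith⟩
  have hmemU : ∀ t ∈ Metric.ball (0:ℝ) ε, ∀ a x, e a x + t * s a x ∈ U :=
    fun t ht a x => hKU (hmem t ht a x)
  -- derivatives of B on U
  have hBd1 : ∀ y ∈ U, HasDerivAt B (deriv B y) y := fun y hy =>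
    ((hB.contDiffAt (hU.mem_nhds hy)).differentiableAt two_ne_zero).hasDerivAt
  have hB1 : ContDiffOn ℝ 1 (deriv B) U := hB.deriv_of_isOpen hU (by norm_num)
  have hBd2 : ∀ y ∈ U, HasDerivAt (deriv B) (deriv (deriv B) y) y := fun y hy =>
    ((hB1.contDiffAt (hU.mem_nhds hy)).differentiableAt one_ne_zero).hasDerivAt
  -- bounds for B, B', B'' on K
  have hKcomp : IsCompact K := isCompact_Icc
  obtain ⟨C0₀, hC0₀⟩ := hKcomp.exists_bound_of_continuousOn (hB.continuousOn.mono hKU)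
  obtain ⟨C1₀, hC1₀⟩ := hKcomp.exists_bound_of_continuousOn
    ((hB.continuousOn_deriv_of_isOpen hU one_le_two).mono hKU)
  obtain ⟨C2₀, hC2₀⟩ := hKcomp.exists_bound_of_continuousOn
    ((hB1.continuousOn_deriv_of_isOpen hU le_rfl).mono hKU)
  set C0 : ℝ := max C0₀ 0 with hC0def
  set C1 : ℝ := max C1₀ 0 with hC1def
  set C2 : ℝ := max C2₀ 0 with hC2def
  have hC0 : ∀ y ∈ K, |B y| ≤ C0 := fun y hy =>
    le_trans (by simpa [Real.norm_eq_abs] using hC0₀ y hy) (le_max_left _ _)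
  have hC1 : ∀ y ∈ K, |deriv B y| ≤ C1 := fun y hy =>
    le_trans (by simpa [Real.norm_eq_abs] using hC1₀ y hy) (le_max_left _ _)
  have hC2 : ∀ y ∈ K, |deriv (deriv B) y| ≤ C2 := fun y hy =>
    le_trans (by simpa [Real.norm_eq_abs] using hC2₀ y hy) (le_max_left _ _)
  have hC10 : (0:ℝ) ≤ C1 := le_max_right _ _
  have hC20 : (0:ℝ) ≤ C2 := le_max_right _ _
  -- retraction onto K
  set π : ℝ → ℝ := fun y => max (c - δ) (min y (1 - c + δ)) with hπdef
  have hπcont : Continuous π := continuous_const.max (continuous_id.min continuous_const)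
  have hπmem : ∀ y, π y ∈ K := fun y =>
    ⟨le_max_left _ _, max_le (by linarith) (min_le_right _ _)⟩
  have hπfix : ∀ y ∈ K, π y = y := by
    rintro y ⟨h1, h2⟩
    rw [hπdef]
    simp only
    rw [min_eq_left h2, max_eq_right h1]
  have hBtil : Continuous (fun y => B (π y)) :=
    (hB.continuousOn.mono hKU).comp_continuous hπcont hπmem
  -- the absolute bound on K
  set Mv : ℝ := 1 - c + δ with hMvdef
  have hMv0 : (0:ℝ) ≤ Mv := by rw [hMvdef]; linarith
  have habsK : ∀ y ∈ K, |y| ≤ Mv := by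
    rintro y ⟨h1, h2⟩
    rw [abs_le]
    constructor <;> [skip; linarith]
    rw [hMvdef]; linarith
  -- measurability helpers
  have hfin2 : ∀ a : Fin 2, a = 0 ∨ a = 1 := by decide
  have hAmeas : ∀ a : Fin 2, Measurable (fun ω => (if A ω = a then (1:ℝ) else 0)) := fun a =>
    Measurable.ite (hA (measurableSet_singleton a)) measurable_const measurable_const
  have hswap : ∀ f : Fin 2 → Ω → ℝ, (∀ a, Measurable (f a)) →
      Measurable (fun ω => f (A ω) ω) := by
    intro f hf
    have hrw : (fun ω => f (A ω) ω) = fun ω => ∑ a : Fin 2, if A ω = a then f a ω else 0 := by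
      funext ω
      rcases hfin2 (A ω) with h | h <;> rw [h] <;> simp [Fin.sum_univ_two]
    rw [hrw]
    exact Finset.measurable_sum _ fun a _ =>
      Measurable.ite (hA (measurableSet_singleton a)) (hf a) measurable_const
  have hGmeas' : Measurable (fun ω => G (Y ω) (A ω) (X ω)) :=
    hG_meas.comp (hY.prodMk (hA.prodMk hX))
  have hvmeas : ∀ (t : ℝ) (a : Fin 2), Measurable (fun ω => e a (X ω) + t * s a (X ω)) :=
    fun t a => ((he_meas a).comp hX).add (((hs_meas a).comp hX).const_mul t)
  -- measurability of F t for t in the ball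
  have hFmeas : ∀ t ∈ Metric.ball (0:ℝ) ε,
      Measurable (fun ω => L (fun a x => e a x + t * s a x) ω) := by
    intro t ht
    have hrw : (fun ω => L (fun a x => e a x + t * s a x) ω) = fun ω =>
        (lam (A ω) (X ω) * (B (π (e (A ω) (X ω) + t * s (A ω) (X ω))) + G (Y ω) (A ω) (X ω)) +
            u (A ω) (X ω)) +
          ∑ a : Fin 2, (e a (X ω) + t * s a (X ω)) * lam a (X ω) *
            deriv B (e a (X ω) + t * s a (X ω)) *
            ((if A ω = a then (1:ℝ) else 0) - (e a (X ω) + t * s a (X ω))) := by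
      funext ω
      rw [hL]
      rw [hπfix _ (hmem t ht _ _)]
    rw [hrw]
    apply Measurable.add
    · apply hswap (fun a ω => lam a (X ω) *
        (B (π (e a (X ω) + t * s a (X ω))) + G (Y ω) a (X ω)) + u a (X ω))
      intro a
      exact (((hlam_meas a).comp hX).mul
        ((hBtil.measurable.comp (hvmeas t a)).add
          (hG_meas.comp (hY.prodMk (measurable_const.prodMk hX))))).add ((hu_meas a).comp hX)
    · apply Finset.measurable_sum
      intro a _
      exact ((((hvmeas t a).mul ((hlam_meas a).comp hX)).mul
        ((measurable_deriv B).comp (hvmeas t a))).mul ((hAmeas a).sub (hvmeas t a)))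
  -- the pointwise derivative
  set F' : ℝ → Ω → ℝ := fun t ω =>
    lam (A ω) (X ω) * (deriv B (e (A ω) (X ω) + t * s (A ω) (X ω)) * s (A ω) (X ω)) +
      ∑ a : Fin 2,
        ((s a (X ω) * lam a (X ω) * deriv B (e a (X ω) + t * s a (X ω)) +
            (e a (X ω) + t * s a (X ω)) * lam a (X ω) *
              (deriv (deriv B) (e a (X ω) + t * s a (X ω)) * s a (X ω))) *
            ((if A ω = a then (1:ℝ) else 0) - (e a (X ω) + t * s a (X ω))) +
          (e a (X ω) + t * s a (X ω)) * lam a (X ω) *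
            deriv B (e a (X ω) + t * s a (X ω)) * (-(s a (X ω)))) with hF'def
  have hF'meas : ∀ t : ℝ, Measurable (F' t) := by
    intro t
    rw [hF'def]
    apply Measurable.add
    · apply hswap (fun a ω => lam a (X ω) *
        (deriv B (e a (X ω) + t * s a (X ω)) * s a (X ω)))
      intro a
      exact ((hlam_meas a).comp hX).mul
        (((measurable_deriv B).comp (hvmeas t a)).mul ((hs_meas a).comp hX))
    · apply Finset.measurable_sum
      intro a _
      refine Measurable.add ?_ ?_
      · exact ((((((hs_meas a).comp hX).mul ((hlam_meas a).comp hX)).mul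
          ((measurable_deriv B).comp (hvmeas t a))).add
            (((hvmeas t a).mul ((hlam_meas a).comp hX)).mul
              (((measurable_deriv (deriv B)).comp (hvmeas t a)).mul
                ((hs_meas a).comp hX)))).mul ((hAmeas a).sub (hvmeas t a)))
      · exact ((((hvmeas t a).mul ((hlam_meas a).comp hX)).mul
          ((measurable_deriv B).comp (hvmeas t a))).mul (((hs_meas a).comp hX).neg))
  -- differentiability of the integrand
  have h_diff : ∀ ω, ∀ t ∈ Metric.ball (0:ℝ) ε,
      HasDerivAt (fun t => L (fun a x => e a x + t * s a x) ω) (F' t ω) t := by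
    intro ω t ht
    have hv : ∀ a : Fin 2, HasDerivAt (fun t : ℝ => e a (X ω) + t * s a (X ω)) (s a (X ω)) t :=
      fun a => (hasDerivAt_mul_const (s a (X ω))).const_add (e a (X ω))
    have hBv : ∀ a : Fin 2, HasDerivAt (fun t : ℝ => B (e a (X ω) + t * s a (X ω)))
        (deriv B (e a (X ω) + t * s a (X ω)) * s a (X ω)) t :=
      fun a => (hBd1 _ (hmemU t ht a (X ω))).comp t (hv a)
    have hB'v : ∀ a : Fin 2, HasDerivAt (fun t : ℝ => deriv B (e a (X ω) + t * s a (X ω)))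
        (deriv (deriv B) (e a (X ω) + t * s a (X ω)) * s a (X ω)) t :=
      fun a => (hBd2 _ (hmemU t ht a (X ω))).comp (h₂ := deriv B) t (hv a)
    have hsum : HasDerivAt (fun t : ℝ => ∑ a : Fin 2,
        (e a (X ω) + t * s a (X ω)) * lam a (X ω) * deriv B (e a (X ω) + t * s a (X ω)) *
          ((if A ω = a then (1:ℝ) else 0) - (e a (X ω) + t * s a (X ω))))
        (∑ a : Fin 2,
          ((s a (X ω) * lam a (X ω) * deriv B (e a (X ω) + t * s a (X ω)) +
              (e a (X ω) + t * s a (X ω)) * lam a (X ω) *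
                (deriv (deriv B) (e a (X ω) + t * s a (X ω)) * s a (X ω))) *
              ((if A ω = a then (1:ℝ) else 0) - (e a (X ω) + t * s a (X ω))) +
            (e a (X ω) + t * s a (X ω)) * lam a (X ω) *
              deriv B (e a (X ω) + t * s a (X ω)) * (-(s a (X ω))))) t := by
      apply HasDerivAt.fun_sum
      intro a _
      exact (((hv a).mul_const (lam a (X ω))).mul (hB'v a)).mul
        ((hv a).const_sub ((if A ω = a then (1:ℝ) else 0)))
    have hmain : HasDerivAt (fun t : ℝ =>
        lam (A ω) (X ω) * (B (e (A ω) (X ω) + t * s (A ω) (X ω)) + G (Y ω) (A ω) (X ω)) +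
          u (A ω) (X ω))
        (lam (A ω) (X ω) *
          (deriv B (e (A ω) (X ω) + t * s (A ω) (X ω)) * s (A ω) (X ω))) t :=
      (((hBv (A ω)).add_const _).const_mul _).add_const _
    have := hmain.add hsum
    rw [hF'def]
    simp only [hL]
    exact this
  -- bound on the derivative
  set T : ℝ := (Ms * Mlam * C1 + Mv * Mlam * (C2 * Ms)) * (1 + Mv) + Mv * Mlam * C1 * Ms
    with hTdef
  set Cb : ℝ := Mlam * (C1 * Ms) + (T + T) with hCbdef
  have h_bound : ∀ ω, ∀ t ∈ Metric.ball (0:ℝ) ε, |F' t ω| ≤ Cb := by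
    intro ω t ht
    have hlamb : ∀ a, |lam a (X ω)| ≤ Mlam := fun a => by
      rw [abs_of_pos (hlam_pos a (X ω))]; exact hlam_bdd a (X ω)
    have hvK : ∀ a, e a (X ω) + t * s a (X ω) ∈ K := fun a => hmem t ht a (X ω)
    have hvb : ∀ a, |e a (X ω) + t * s a (X ω)| ≤ Mv := fun a => habsK _ (hvK a)
    have hB'b : ∀ a, |deriv B (e a (X ω) + t * s a (X ω))| ≤ C1 := fun a => hC1 _ (hvK a)
    have hB''b : ∀ a, |deriv (deriv B) (e a (X ω) + t * s a (X ω))| ≤ C2 :=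
      fun a => hC2 _ (hvK a)
    have hIb : ∀ a : Fin 2, |(if A ω = a then (1:ℝ) else 0)| ≤ 1 := by
      intro a; split <;> norm_num
    have hIvb : ∀ a, |(if A ω = a then (1:ℝ) else 0) - (e a (X ω) + t * s a (X ω))| ≤ 1 + Mv :=
      fun a => (abs_sub _ _).trans (add_le_add (hIb a) (hvb a))
    have hterm : ∀ a : Fin 2,
        |(s a (X ω) * lam a (X ω) * deriv B (e a (X ω) + t * s a (X ω)) +
            (e a (X ω) + t * s a (X ω)) * lam a (X ω) *
              (deriv (deriv B) (e a (X ω) + t * s a (X ω)) * s a (X ω))) *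
            ((if A ω = a then (1:ℝ) else 0) - (e a (X ω) + t * s a (X ω))) +
          (e a (X ω) + t * s a (X ω)) * lam a (X ω) *
            deriv B (e a (X ω) + t * s a (X ω)) * (-(s a (X ω)))| ≤ T := by
      intro a
      rw [hTdef]
      refine (abs_add_le _ _).trans (add_le_add ?_ ?_)
      · refine abs_mul_le'' ((abs_add_le _ _).trans (add_le_add ?_ ?_)) (hIvb a)
        · exact abs_mul_le'' (abs_mul_le'' (hMs a _) (hlamb a)) (hB'b a)
        · exact abs_mul_le'' (abs_mul_le'' (hvb a) (hlamb a))
            (abs_mul_le'' (hB''b a) (hMs a _))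
      · refine abs_mul_le'' (abs_mul_le'' (abs_mul_le'' (hvb a) (hlamb a)) (hB'b a)) ?_
        rw [abs_neg]; exact hMs a _
    rw [hF'def, hCbdef]
    refine (abs_add_le _ _).trans (add_le_add ?_ ?_)
    · exact abs_mul_le'' (hlamb _) (abs_mul_le'' (hB'b _) (hMs _ _))
    · rw [Fin.sum_univ_two]
      exact (abs_add_le _ _).trans (add_le_add (hterm 0) (hterm 1))
  -- integrability of F 0
  have h0mem : (0:ℝ) ∈ Metric.ball (0:ℝ) ε := Metric.mem_ball_self hεpos
  have hF0bd : ∀ ω, |L (fun a x => e a x + 0 * s a x) ω| ≤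
      Mlam * (C0 + MG) + Mu + (Mv * Mlam * C1 * (1 + Mv) + Mv * Mlam * C1 * (1 + Mv)) := by
    intro ω
    rw [hL]
    have hlamb : ∀ a, |lam a (X ω)| ≤ Mlam := fun a => by
      rw [abs_of_pos (hlam_pos a (X ω))]; exact hlam_bdd a (X ω)
    have hvK : ∀ a, e a (X ω) + 0 * s a (X ω) ∈ K := fun a => hmem 0 h0mem a (X ω)
    have hvb : ∀ a, |e a (X ω) + 0 * s a (X ω)| ≤ Mv := fun a => habsK _ (hvK a)
    have hB'b : ∀ a, |deriv B (e a (X ω) + 0 * s a (X ω))| ≤ C1 := fun a => hC1 _ (hvK a)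
    have hIb : ∀ a : Fin 2, |(if A ω = a then (1:ℝ) else 0)| ≤ 1 := by
      intro a; split <;> norm_num
    have hIvb : ∀ a,
        |(if A ω = a then (1:ℝ) else 0) - (e a (X ω) + 0 * s a (X ω))| ≤ 1 + Mv :=
      fun a => (abs_sub _ _).trans (add_le_add (hIb a) (hvb a))
    have hterm : ∀ a : Fin 2,
        |(e a (X ω) + 0 * s a (X ω)) * lam a (X ω) *
          deriv B (e a (X ω) + 0 * s a (X ω)) *
            ((if A ω = a then (1:ℝ) else 0) - (e a (X ω) + 0 * s a (X ω)))| ≤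
          Mv * Mlam * C1 * (1 + Mv) :=
      fun a => abs_mul_le'' (abs_mul_le'' (abs_mul_le'' (hvb a) (hlamb a)) (hB'b a)) (hIvb a)
    refine (abs_add_le _ _).trans (add_le_add ((abs_add_le _ _).trans (add_le_add ?_ ?_)) ?_)
    · refine abs_mul_le'' (hlamb _) ((abs_add_le _ _).trans (add_le_add ?_ (hG_bdd _ _ _)))
      exact hC0 _ (hvK _)
    · exact hu_bdd _ _
    · rw [Fin.sum_univ_two]
      exact (abs_add_le _ _).trans (add_le_add (hterm 0) (hterm 1))
  have hF0int : Integrable (fun ω => L (fun a x => e a x + 0 * s a x) ω) μ :=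
    ⟨(hFmeas 0 h0mem).aestronglyMeasurable,
      HasFiniteIntegral.of_bounded (ae_of_all μ fun ω => by
        rw [Real.norm_eq_abs]; exact hF0bd ω)⟩
  -- apply differentiation under the integral sign
  have key := hasDerivAt_integral_of_dominated_loc_of_deriv_le (μ := μ) (x₀ := (0:ℝ))
    (F := fun t ω => L (fun a x => e a x + t * s a x) ω) (F' := F')
    (bound := fun _ => Cb) (Metric.ball_mem_nhds 0 hεpos)
    (Filter.eventually_of_mem (Metric.ball_mem_nhds 0 hεpos)
      fun t ht => (hFmeas t ht).aestronglyMeasurable)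
    hF0int ((hF'meas 0).aestronglyMeasurable)
    (ae_of_all μ fun ω t ht => by rw [Real.norm_eq_abs]; exact h_bound ω t ht)
    (integrable_const Cb)
    (ae_of_all μ fun ω t ht => h_diff ω t ht)
  -- compute the derivative: conditional-expectation orthogonality
  have hm : MeasurableSpace.comap X ‹MeasurableSpace 𝒳› ≤ _ := hX.comap_le
  haveI hsf : SigmaFinite (μ.trim hm) := by infer_instance
  have hortho : ∀ a : Fin 2, ∀ h : 𝒳 → ℝ, Measurable h → ∀ C : ℝ, (∀ x, |h x| ≤ C) →
      ∫ ω, ((if A ω = a then (1:ℝ) else 0) - e a (X ω)) * h (X ω) ∂μ = 0 := by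
    intro a h hh C hC
    have hXm : Measurable[MeasurableSpace.comap X ‹MeasurableSpace 𝒳›] X :=
      Measurable.of_comap_le le_rfl
    have hgm : StronglyMeasurable[MeasurableSpace.comap X ‹MeasurableSpace 𝒳›]
        (fun ω => h (X ω)) :=
      (hh.comp hXm).stronglyMeasurable
    have hIint : Integrable (fun ω => if A ω = a then (1:ℝ) else 0) μ :=
      ⟨(hAmeas a).aestronglyMeasurable,
        HasFiniteIntegral.of_bounded (C := 1) (ae_of_all _ fun ω => by
          by_cases hAa : A ω = a <;> simp [hAa, Real.norm_eq_abs])⟩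
    have hprod : Integrable ((fun ω => h (X ω)) * fun ω => if A ω = a then (1:ℝ) else 0) μ :=
      ⟨(((hh.comp hX).mul (hAmeas a)).aestronglyMeasurable),
        HasFiniteIntegral.of_bounded (C := |C| * 1) (ae_of_all _ fun ω => by
          rw [Real.norm_eq_abs]
          simp only [Pi.mul_apply]
          exact abs_mul_le'' ((hC (X ω)).trans (le_abs_self C))
            (by by_cases hAa : A ω = a <;> simp [hAa]))⟩
    have heint : Integrable (fun ω => h (X ω) * e a (X ω)) μ :=
      ⟨((hh.comp hX).mul ((he_meas a).comp hX)).aestronglyMeasurable,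
        HasFiniteIntegral.of_bounded (C := |C| * 1) (ae_of_all _ fun ω => by
          rw [Real.norm_eq_abs]
          refine abs_mul_le'' ((hC (X ω)).trans (le_abs_self C)) ?_
          obtain ⟨h1, h2⟩ := he_range a (X ω)
          rw [abs_le]; constructor <;> linarith)⟩
    have hpull := condExp_mul_of_stronglyMeasurable_left hgm hprod hIint
    have h3 := integral_condExp (μ := μ)
      (f := (fun ω => h (X ω)) * fun ω => if A ω = a then (1:ℝ) else 0) hm
    have h2 : ∫ ω, ((fun ω => h (X ω)) * fun ω => if A ω = a then (1:ℝ) else 0) ω ∂μ =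
        ∫ ω, h (X ω) * e a (X ω) ∂μ := by
      rw [← h3]
      refine integral_congr_ae ?_
      filter_upwards [hpull, he_cond a] with ω h1ω h2ω
      rw [h1ω, Pi.mul_apply, h2ω]
    have hsub : ∫ ω, ((if A ω = a then (1:ℝ) else 0) - e a (X ω)) * h (X ω) ∂μ =
        (∫ ω, ((fun ω => h (X ω)) * fun ω => if A ω = a then (1:ℝ) else 0) ω ∂μ) -
          ∫ ω, h (X ω) * e a (X ω) ∂μ := by
      rw [← integral_sub hprod heint]
      refine integral_congr_ae (ae_of_all _ fun ω => ?_)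
      simp only [Pi.mul_apply]
      ring
    rw [hsub, h2, sub_self]
  -- the combined direction function
  set H : Fin 2 → 𝒳 → ℝ := fun a x =>
    lam a x * s a x * (2 * deriv B (e a x) + e a x * deriv (deriv B) (e a x)) with hHdef
  have hHmeas : ∀ a, Measurable (H a) := by
    intro a
    rw [hHdef]
    exact ((hlam_meas a).mul (hs_meas a)).mul
      ((((measurable_deriv B).comp (he_meas a)).const_mul 2).add
        ((he_meas a).mul ((measurable_deriv (deriv B)).comp (he_meas a))))
  have hHbd : ∀ a x, |H a x| ≤ Mlam * Ms * (2 * C1 + Mv * C2) := by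
    intro a x
    rw [hHdef]
    have hlamb : |lam a x| ≤ Mlam := by
      rw [abs_of_pos (hlam_pos a x)]; exact hlam_bdd a x
    refine abs_mul_le'' (abs_mul_le'' hlamb (hMs a x)) ?_
    refine (abs_add_le _ _).trans (add_le_add ?_ ?_)
    · rw [abs_mul, abs_two]
      exact mul_le_mul_of_nonneg_left (hC1 _ (heK a x)) (by norm_num)
    · exact abs_mul_le'' (habsK _ (heK a x)) (hC2 _ (heK a x))
  -- F' 0 rewritten via H
  have hF'eq : ∀ ω, F' 0 ω =
      ∑ a : Fin 2, ((if A ω = a then (1:ℝ) else 0) - e a (X ω)) * H a (X ω) := by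
    intro ω
    rw [hF'def, hHdef]
    simp only [zero_mul, add_zero, Fin.sum_univ_two]
    rcases hfin2 (A ω) with h | h <;> rw [h] <;> norm_num <;> ring
  have hzint : ∀ a : Fin 2,
      Integrable (fun ω => ((if A ω = a then (1:ℝ) else 0) - e a (X ω)) * H a (X ω)) μ := by
    intro a
    refine ⟨(((hAmeas a).sub ((he_meas a).comp hX)).mul
      ((hHmeas a).comp hX)).aestronglyMeasurable,
      HasFiniteIntegral.of_bounded
        (C := (1 + Mv) * (Mlam * Ms * (2 * C1 + Mv * C2))) (ae_of_all _ fun ω => ?_)⟩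
    rw [Real.norm_eq_abs]
    refine abs_mul_le'' ((abs_sub _ _).trans (add_le_add ?_ (habsK _ (heK a (X ω)))))
      (hHbd a (X ω))
    split <;> norm_num
  have hzero : ∫ ω, F' 0 ω ∂μ = 0 := by
    rw [integral_congr_ae (ae_of_all μ hF'eq)]
    rw [integral_finset_sum _ fun a _ => hzint a]
    refine Finset.sum_eq_zero fun a _ => ?_
    exact hortho a (H a) (hHmeas a) (Mlam * Ms * (2 * C1 + Mv * C2)) (hHbd a)
  have hkey := key.2
  rw [hzero] at hkey
  exact hkey
end
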